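/- arXiv:2512.13920 — 5 statements merged into one kernel-verified Lean document; each statement's English description precedes it below -/
import Mathlib

section
/- Let K, d ≥ 1, let W ∈ ℝ^{K×K} be symmetric with I_K − W positive semidefinite, and set 𝒲 = W ⊗ I_d, A = 𝒲, C = I_{Kd}, and B = (I_{Kd} − 𝒲)^{1/2} (the positive semidefinite square root). Let μ > 0 and let sequences (X_i), (D_i), (M_i) in ℝ^{Kd} satisfy X_{i+1} = A(C X_i − μ M_i) − B D_i and D_{i+1} = D_i + B X_{i+1} for all i ≥ 0. Then for all i ≥ 0, X_{i+2} = 𝒲 ( 2 X_{i+1} − X_i − μ (M_{i+1} − M_i) ), which is the Exact Diffusion (D²) update. -/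
open Matrix
open scoped Kronecker

/-- Exact Diffusion (D²) as a special case of DAMA: with `𝒲 = W ⊗ I_d`,
`A = 𝒲`, `C = I`, and `B` the positive semidefinite square root of `I − 𝒲`, the DAMA
recursion `X_{i+1} = A(C X_i − μ M_i) − B D_i`, `D_{i+1} = D_i + B X_{i+1}` yields
`X_{i+2} = 𝒲(2 X_{i+1} − X_i − μ(M_{i+1} − M_i))`. -/
theorem stmt_14 (K d : ℕ) (hK : 1 ≤ K) (hd : 1 ≤ d)
    (W : Matrix (Fin K) (Fin K) ℝ) (hsymm : W.IsSymm)
    (hpsd : ((1 : Matrix (Fin K) (Fin K) ℝ) - W).PosSemidef)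
    (Wx : Matrix (Fin K × Fin d) (Fin K × Fin d) ℝ)
    (hWx : Wx = W ⊗ₖ (1 : Matrix (Fin d) (Fin d) ℝ))
    (A C B : Matrix (Fin K × Fin d) (Fin K × Fin d) ℝ)
    (hA : A = Wx) (hC : C = 1)
    (hBpsd : B.PosSemidef) (hBsq : B * B = 1 - Wx)
    (μ : ℝ) (hμ : 0 < μ)
    (X D M : ℕ → (Fin K × Fin d) → ℝ)
    (hX : ∀ i, X (i + 1) = A.mulVec (C.mulVec (X i) - μ • M i) - B.mulVec (D i))
    (hD : ∀ i, D (i + 1) = D i + B.mulVec (X (i + 1))) :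
    ∀ i, X (i + 2)
      = Wx.mulVec ((2 : ℝ) • X (i + 1) - X i - μ • (M (i + 1) - M i)) := by
  subst hA hC
  intro i
  have hBD : B.mulVec (D i) = A *ᵥ (X i - μ • M i) - X (i + 1) := by
    have h1 := hX i
    rw [Matrix.one_mulVec] at h1
    rw [h1]; abel
  have hBB : ∀ v, B.mulVec (B.mulVec v) = v - A *ᵥ v := by
    intro v
    rw [Matrix.mulVec_mulVec, hBsq, Matrix.sub_mulVec, Matrix.one_mulVec]
  have h2 := hX (i + 1)
  rw [Matrix.one_mulVec, hD i, Matrix.mulVec_add, hBB, hBD] at h2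
  show X (i + 1 + 1) = _
  rw [h2]
  simp only [Matrix.mulVec_sub, Matrix.mulVec_smul]
  module
end

section
/- Let K, d ≥ 1, let W ∈ ℝ^{K×K} be symmetric with I_K − W positive semidefinite, and set 𝒲 = W ⊗ I_d, A = I_{Kd}, C = 𝒲, and B = (I_{Kd} − 𝒲)^{1/2} (the positive semidefinite square root). Let μ > 0 and let sequences (X_i), (D_i), (M_i) in ℝ^{Kd} satisfy X_{i+1} = A(C X_i − μ M_i) − B D_i and D_{i+1} = D_i + B X_{i+1} for all i ≥ 0. Then for all i ≥ 0, X_{i+2} = 𝒲 ( 2 X_{i+1} − X_i ) − μ (M_{i+1} − M_i), which is the EXTRA update. -/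
open Matrix
open scoped Kronecker

/-- EXTRA as a special case of DAMA: with `𝒲 = W ⊗ I_d`, `A = I`,
`C = 𝒲`, and `B` the positive semidefinite square root of `I − 𝒲`, the DAMA
recursion `X_{i+1} = A(C X_i − μ M_i) − B D_i`, `D_{i+1} = D_i + B X_{i+1}` yields
`X_{i+2} = 𝒲(2 X_{i+1} − X_i) − μ(M_{i+1} − M_i)`. -/
theorem stmt_15 (K d : ℕ) (hK : 1 ≤ K) (hd : 1 ≤ d)
    (W : Matrix (Fin K) (Fin K) ℝ) (hsymm : W.IsSymm)
    (hpsd : ((1 : Matrix (Fin K) (Fin K) ℝ) - W).PosSemidef)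
    (Wx : Matrix (Fin K × Fin d) (Fin K × Fin d) ℝ)
    (hWx : Wx = W ⊗ₖ (1 : Matrix (Fin d) (Fin d) ℝ))
    (A C B : Matrix (Fin K × Fin d) (Fin K × Fin d) ℝ)
    (hA : A = 1) (hC : C = Wx)
    (hBpsd : B.PosSemidef) (hBsq : B * B = 1 - Wx)
    (μ : ℝ) (hμ : 0 < μ)
    (X D M : ℕ → (Fin K × Fin d) → ℝ)
    (hX : ∀ i, X (i + 1) = A.mulVec (C.mulVec (X i) - μ • M i) - B.mulVec (D i))
    (hD : ∀ i, D (i + 1) = D i + B.mulVec (X (i + 1))) :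
    ∀ i, X (i + 2)
      = Wx.mulVec ((2 : ℝ) • X (i + 1) - X i) - μ • (M (i + 1) - M i) := by
  intro i
  subst hA hC
  have h1 := hX i
  have h2 := hX (i + 1)
  rw [hD i] at h2
  simp only [one_mulVec, mulVec_add, mulVec_mulVec, hBsq, sub_mulVec, one_mulVec] at h1 h2
  have hB : B.mulVec (D i) = C.mulVec (X i) - μ • M i - X (i + 1) := by
    rw [h1]; abel
  show X (i + 1 + 1) = _
  rw [h2, hB, mulVec_sub, mulVec_smul, two_smul, smul_sub]
  abel
end

section
/- Let K, d ≥ 1, let 𝒲 ∈ ℝ^{Kd×Kd}, let μ > 0, and let sequences (X_i)_{i≥0}, (G_i)_{i≥0}, (M_i)_{i≥0} in ℝ^{Kd} satisfy the adapt-then-combine gradient tracking recursions X_{i+1} = 𝒲 (X_i − μ G_i) and G_{i+1} = 𝒲 (G_i + M_{i+1} − M_i) for all i ≥ 0. Then for all i ≥ 0, X_{i+2} = 2 𝒲 X_{i+1} − 𝒲² X_i − μ 𝒲² (M_{i+1} − M_i). Consequently the ATC-GT iterates coincide with the two-step DAMA recursion X_{i+2} = (I + A C − B²)X_{i+1} −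 A C X_i − μ A (M_{i+1} − M_i) with the choices A = 𝒲², C = I_{Kd}, B = I_{Kd} − 𝒲. -/
open Matrix

theorem atc_gt_key (K d : ℕ)
    (W : Matrix (Fin K × Fin d) (Fin K × Fin d) ℝ) (μ : ℝ)
    (X G M : ℕ → (Fin K × Fin d) → ℝ)
    (hX : ∀ i, X (i + 1) = W.mulVec (X i - μ • G i))
    (hG : ∀ i, G (i + 1) = W.mulVec (G i + (M (i + 1) - M i))) :
    ∀ i, X (i + 2) = (2 : ℝ) • W.mulVec (X (i + 1)) - (W * W).mulVec (X i)
      - μ • (W * W).mulVec (M (i + 1) - M i) := by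
  intro i
  have h1 : W.mulVec (X (i + 1)) = (W * W).mulVec (X i) - μ • (W * W).mulVec (G i) := by
    rw [hX i]
    simp [Matrix.mulVec_sub, Matrix.mulVec_smul, Matrix.mulVec_mulVec]
  have h2 : X (i + 2) = W.mulVec (X (i + 1)) - μ • ((W * W).mulVec (G i)
      + (W * W).mulVec (M (i + 1) - M i)) := by
    have := hX (i + 1)
    rw [hG i] at this
    rw [this]
    simp [Matrix.mulVec_sub, Matrix.mulVec_add, Matrix.mulVec_smul,
      Matrix.mulVec_mulVec, smul_add]
  rw [h2, h1]
  ext x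
  simp [Pi.smul_apply, two_smul]
  ring

/-- Adapt-then-combine gradient tracking (ATC-GT):
if `X_{i+1} = 𝒲(X_i − μ G_i)` and `G_{i+1} = 𝒲(G_i + M_{i+1} − M_i)`, then
`X_{i+2} = 2𝒲 X_{i+1} − 𝒲² X_i − μ 𝒲² (M_{i+1} − M_i)`; consequently ATC-GT coincides
with the two-step DAMA recursion with `A = 𝒲²`, `C = I`, `B = I − 𝒲`. -/
theorem stmt_16 (K d : ℕ) (hK : 1 ≤ K) (hd : 1 ≤ d)
    (W : Matrix (Fin K × Fin d) (Fin K × Fin d) ℝ) (μ : ℝ) (hμ : 0 < μ)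
    (X G M : ℕ → (Fin K × Fin d) → ℝ)
    (hX : ∀ i, X (i + 1) = W.mulVec (X i - μ • G i))
    (hG : ∀ i, G (i + 1) = W.mulVec (G i + (M (i + 1) - M i))) :
    (∀ i, X (i + 2) = (2 : ℝ) • W.mulVec (X (i + 1)) - (W * W).mulVec (X i)
      - μ • (W * W).mulVec (M (i + 1) - M i)) ∧
    (∀ i, X (i + 2)
      = (1 + (W * W) * 1 - (1 - W) * (1 - W)).mulVec (X (i + 1))
        - ((W * W) * 1).mulVec (X i) - μ • (W * W).mulVec (M (i + 1) - M i)) := by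
  have key := atc_gt_key K d W μ X G M hX hG
  refine ⟨key, fun i => ?_⟩
  have hm : (1 + (W * W) * 1 - (1 - W) * (1 - W)) = W + W := by
    noncomm_ring
  rw [hm, key i, mul_one, Matrix.add_mulVec]
  congr 1
  ext x
  simp [two_smul]
end

section
/- Let K, d ≥ 1, let 𝒲 ∈ ℝ^{Kd×Kd}, let μ > 0, and let sequences (X_i)_{i≥0}, (G_i)_{i≥0}, (M_i)_{i≥0} in ℝ^{Kd} satisfy the semi-adapt-then-combine gradient tracking recursions X_{i+1} = 𝒲 X_i − μ G_i and G_{i+1} = 𝒲 (G_i + M_{i+1} − M_i) for all i ≥ 0. Then for all i ≥ 0, X_{i+2} = 2 𝒲 X_{i+1} − 𝒲² X_i − μ 𝒲 (M_{i+1} − M_i). Consequently the semi-ATC-GT iterates coincide with the two-step DAMA recursion X_{i+2} = (I + A C − B²)X_{i+1} − A C X_i − μ A (M_{i+1} − M_i) with the choices A = 𝒲, C = 𝒲, B = I_{Kd} − 𝒲. -/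
open Matrix

/-- Semi-adapt-then-combine gradient tracking (semi-ATC-GT):
if `X_{i+1} = 𝒲 X_i − μ G_i` and `G_{i+1} = 𝒲(G_i + M_{i+1} − M_i)`, then
`X_{i+2} = 2𝒲 X_{i+1} − 𝒲² X_i − μ 𝒲 (M_{i+1} − M_i)`; consequently semi-ATC-GT coincides
with the two-step DAMA recursion with `A = 𝒲`, `C = 𝒲`, `B = I − 𝒲`. -/
theorem stmt_17 (K d : ℕ) (hK : 1 ≤ K) (hd : 1 ≤ d)
    (W : Matrix (Fin K × Fin d) (Fin K × Fin d) ℝ) (μ : ℝ) (hμ : 0 < μ)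
    (X G M : ℕ → (Fin K × Fin d) → ℝ)
    (hX : ∀ i, X (i + 1) = W.mulVec (X i) - μ • G i)
    (hG : ∀ i, G (i + 1) = W.mulVec (G i + (M (i + 1) - M i))) :
    (∀ i, X (i + 2) = (2 : ℝ) • W.mulVec (X (i + 1)) - (W * W).mulVec (X i)
      - μ • W.mulVec (M (i + 1) - M i)) ∧
    (∀ i, X (i + 2)
      = (1 + W * W - (1 - W) * (1 - W)).mulVec (X (i + 1))
        - (W * W).mulVec (X i) - μ • W.mulVec (M (i + 1) - M i)) := by
  have key : ∀ i, X (i + 2) = (2 : ℝ) • W.mulVec (X (i + 1)) - (W * W).mulVec (X i)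
      - μ • W.mulVec (M (i + 1) - M i) := by
    intro i
    have hμG : μ • G i = W.mulVec (X i) - X (i + 1) := by
      rw [hX i]; abel
    have h1 : X (i + 2) = W.mulVec (X (i + 1)) - μ • G (i + 1) := hX (i + 1)
    rw [h1, hG i, mulVec_add, smul_add, ← mulVec_smul, hμG, mulVec_sub,
      mulVec_mulVec, two_smul]
    abel
  refine ⟨key, fun i => ?_⟩
  have hM : (1 + W * W - (1 - W) * (1 - W)) = (2 : ℝ) • W := by
    have : (2 : ℝ) • W = W + W := by
      rw [two_smul]
    rw [this]; noncomm_ring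
  rw [key i, hM, smul_mulVec]
end

section
/- Let K, d ≥ 1, let 𝒲 ∈ ℝ^{Kd×Kd}, let μ > 0, and let sequences (X_i)_{i≥0}, (G_i)_{i≥0}, (M_i)_{i≥0} in ℝ^{Kd} satisfy the non-adapt-then-combine gradient tracking recursions X_{i+1} = 𝒲 X_i − μ G_i and G_{i+1} = 𝒲 G_i + M_{i+1} − M_i for all i ≥ 0. Then for all i ≥ 0, X_{i+2} = 2 𝒲 X_{i+1} − 𝒲² X_i − μ (M_{i+1} − M_i). Consequently the non-ATC-GT iterates coincide with the two-step DAMA recursion X_{i+2} = (I + A C − B²)X_{i+1} − A C X_i − μ A (M_{i+1} − M_i) with the choices A = I_{Kd}, C = 𝒲², B = I_{Kd} − 𝒲. -/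
open Matrix

/-- Non-adapt-then-combine gradient tracking (non-ATC-GT):
if `X_{i+1} = 𝒲 X_i − μ G_i` and `G_{i+1} = 𝒲 G_i + M_{i+1} − M_i`, then
`X_{i+2} = 2𝒲 X_{i+1} − 𝒲² X_i − μ (M_{i+1} − M_i)`; consequently non-ATC-GT coincides
with the two-step DAMA recursion with `A = I`, `C = 𝒲²`, `B = I − 𝒲`. -/
theorem stmt_18 (K d : ℕ) (hK : 1 ≤ K) (hd : 1 ≤ d)
    (W : Matrix (Fin K × Fin d) (Fin K × Fin d) ℝ) (μ : ℝ) (hμ : 0 < μ)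
    (X G M : ℕ → (Fin K × Fin d) → ℝ)
    (hX : ∀ i, X (i + 1) = W.mulVec (X i) - μ • G i)
    (hG : ∀ i, G (i + 1) = W.mulVec (G i) + (M (i + 1) - M i)) :
    (∀ i, X (i + 2) = (2 : ℝ) • W.mulVec (X (i + 1)) - (W * W).mulVec (X i)
      - μ • (M (i + 1) - M i)) ∧
    (∀ i, X (i + 2)
      = (1 + 1 * (W * W) - (1 - W) * (1 - W)).mulVec (X (i + 1))
        - (1 * (W * W)).mulVec (X i)
        - μ • (1 : Matrix (Fin K × Fin d) (Fin K × Fin d) ℝ).mulVec (M (i + 1) - M i)) := by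
  have key : ∀ i, X (i + 2) = (2 : ℝ) • W.mulVec (X (i + 1)) - (W * W).mulVec (X i)
      - μ • (M (i + 1) - M i) := by
    intro i
    have hμG : μ • G i = W.mulVec (X i) - X (i + 1) := by
      rw [hX i]; abel
    have h2 : X (i + 2) = W.mulVec (X (i + 1)) - μ • G (i + 1) := hX (i + 1)
    rw [h2, hG i, smul_add, ← Matrix.mulVec_smul, hμG, Matrix.mulVec_sub,
      ← Matrix.mulVec_mulVec, two_smul]
    abel
  refine ⟨key, fun i => ?_⟩
  have hmat : (1 + 1 * (W * W) - (1 - W) * (1 - W)) = W + W := by noncomm_ring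
  rw [key i, hmat, Matrix.one_mul, Matrix.one_mulVec, Matrix.add_mulVec, two_smul]
end
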